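/- In the register machine, the filtering-based stack indistinguishability (comparing only stack frames whose saved pc label flows to the observer) is strictly weaker than the dropWhile-based one and is unsound: there exist two well-stamped indistinguishable states (under the filtering relation) such that one steps to a state with an observable pc while the other steps to a state with an unobservable pc, violating SSNI condition (1). -/

import Mathlib

/-! Frames related by `frameIndist` agree on whether their saved pc is observable, so filtering
out the high frames preserves pointwise indistinguishability; and filtering a stack whose high
prefix was dropped gives the same as filtering the whole stack. Hence the `dropWhile` relation
implies the filtering one.

For strictness and unsoundness, take two states about to `Return` from a low pc, with
stacks `[low]` and `[high, low]`. Filtering makes the stacks agree, but the low pcs force the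
full stacks to be compared, and `Return` pops the low frame in one state and the high frame in
the other. -/

/-- The four-element diamond label lattice `{L, M1, M2, H}`. -/
inductive Diamond where
  | L
  | M1
  | M2
  | H
deriving DecidableEq

instance : Fintype Diamond where
  elems := {Diamond.L, Diamond.M1, Diamond.M2, Diamond.H}
  complete := fun x => by cases x <;> decide

namespace Diamond

/-- The flows-to order: generated by `L ⊑ M1`, `L ⊑ M2`, `M1 ⊑ H`, `M2 ⊑ H`,
reflexivity and transitivity. -/
def dle (a b : Diamond) : Prop := a = b ∨ a = L ∨ b = H

instance : DecidableRel dle := fun a b => by unfold dle; infer_instance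

/-- Join. -/
def djoin : Diamond → Diamond → Diamond
  | L, x => x
  | x, L => x
  | H, _ => H
  | _, H => H
  | M1, M1 => M1
  | M2, M2 => M2
  | M1, M2 => H
  | M2, M1 => H

/-- Meet. -/
def dmeet : Diamond → Diamond → Diamond
  | H, x => x
  | x, H => x
  | L, _ => L
  | _, L => L
  | M1, M1 => M1
  | M2, M2 => M2
  | M1, M2 => L
  | M2, M1 => L

instance : Lattice Diamond where
  le := dle
  le_refl := by exact fun a => Or.inl rfl
  le_trans := by
    exact (by decide : ∀ a b c : Diamond, dle a b → dle b c → dle a c)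
  le_antisymm := by
    exact (by decide : ∀ a b : Diamond, dle a b → dle b a → a = b)
  sup := djoin
  le_sup_left := by
    exact (by decide : ∀ a b : Diamond, dle a (djoin a b))
  le_sup_right := by
    exact (by decide : ∀ a b : Diamond, dle b (djoin a b))
  sup_le := by
    exact (by decide : ∀ a b c : Diamond, dle a c → dle b c → dle (djoin a b) c)
  inf := dmeet
  inf_le_left := by
    exact (by decide : ∀ a b : Diamond, dle (dmeet a b) a)
  inf_le_right := by
    exact (by decide : ∀ a b : Diamond, dle (dmeet a b) b)
  le_inf := by
    exact (by decide : ∀ a b c : Diamond, dle a b → dle a c → dle a (dmeet b c))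

instance : OrderBot Diamond where
  bot := L
  bot_le := by exact (by decide : ∀ a : Diamond, dle L a)

instance : DecidableRel ((· ≤ ·) : Diamond → Diamond → Prop) :=
  fun a b => (inferInstance : Decidable (dle a b))

end Diamond

/-! ## The information-flow register machine, over a label lattice -/

/-- Block identifiers: a stamp label and an integer index. -/
abbrev Bid (Lab : Type) := Lab × ℕ

/-- Values: integers, first-class labels, or pointers. -/
inductive Val (Lab : Type) where
  | int (n : Int)
  | lab (ℓ : Lab)
  | ptr (b : Bid Lab) (o : Int)
deriving DecidableEq

/-- A labeled value `v@ℓ`. -/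
structure Atom (Lab : Type) where
  val : Val Lab
  lab : Lab
deriving DecidableEq

/-- A labeled program counter `n@ℓ`. -/
structure LPC (Lab : Type) where
  addr : Int
  lab : Lab
deriving DecidableEq

/-- A call-stack frame: saved (labeled) return pc, saved register file,
result register, and result label. -/
structure Frame (Lab : Type) where
  retpc : LPC Lab
  savedRegs : List (Atom Lab)
  retReg : ℕ
  retLab : Lab

/-- A memory block: a list of labeled values together with the block label. -/
abbrev Block (Lab : Type) := List (Atom Lab) × Lab

/-- Block-structured memory with per-level allocation: for each stamp, the
list of blocks allocated with that stamp (in allocation order). -/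
abbrev Mem (Lab : Type) := Lab → List (Block Lab)

/-- Instructions of the register machine. -/
inductive RInstr (Lab : Type) where
  | Put (n : Int) (rd : ℕ)
  | Mov (rs rd : ℕ)
  | Load (rp rd : ℕ)
  | Store (rp rs : ℕ)
  | Add (r1 r2 rd : ℕ)
  | Mult (r1 r2 rd : ℕ)
  | Noop
  | Halt
  | Jump (r : ℕ)
  | BranchNZ (n : Int) (r : ℕ)
  | Call (r1 r2 r3 : ℕ)
  | Return
  | PutLabel (ℓ : Lab) (rd : ℕ)
  | LabelOf (rs rd : ℕ)
  | PcLabel (rd : ℕ)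
  | Join (r1 r2 rd : ℕ)
  | FlowsTo (r1 r2 rd : ℕ)
  | Alloc (rn rl rd : ℕ)
  | Write (rp rs : ℕ)
  | Upgrade (rp rl : ℕ)
  | Eq (r1 r2 rd : ℕ)
  | GetOffset (rp rd : ℕ)
  | SetOffset (rp ro rd : ℕ)
  | GetBlockSize (rp rd : ℕ)
  | GetBlockLabel (rp rd : ℕ)

/-- A register-machine state. -/
structure RState (Lab : Type) where
  pc : LPC Lab
  rf : List (Atom Lab)
  cs : List (Frame Lab)
  mem : Mem Lab
  imem : List (RInstr Lab)

/-- Lookup a list at an integer index. -/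
def getI {α : Type} (xs : List α) (i : Int) : Option α :=
  if 0 ≤ i then xs[i.toNat]? else none

/-- Update a list at an integer index. -/
def setI {α : Type} (xs : List α) (i : Int) (a : α) : List α :=
  if 0 ≤ i then xs.set i.toNat a else xs

section Machine

variable {Lab : Type} [Lattice Lab] [OrderBot Lab] [DecidableEq Lab]
variable [DecidableRel ((· ≤ ·) : Lab → Lab → Prop)]

/-- Lookup a memory at a block identifier. -/
def mget (m : Mem Lab) (b : Bid Lab) : Option (Block Lab) := (m b.1)[b.2]?

/-- Update a memory at a block identifier. -/
def mset (m : Mem Lab) (b : Bid Lab) (blk : Block Lab) : Mem Lab :=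
  fun σ => if σ = b.1 then (m σ).set b.2 blk else m σ

/-- The fresh block identifier for stamp `σ`: the first unallocated index. -/
def fresh (m : Mem Lab) (σ : Lab) : Bid Lab := (σ, (m σ).length)

/-- Allocate a new block with stamp `σ`. -/
def allocMem (m : Mem Lab) (σ : Lab) (blk : Block Lab) : Mem Lab :=
  fun σ' => if σ' = σ then m σ' ++ [blk] else m σ'

/-- The current instruction of a state. -/
def instrAt (S : RState Lab) : Option (RInstr Lab) := getI S.imem S.pc.addr

/-- The step relation of the information-flow register machine. -/
inductive RStep : RState Lab → RState Lab → Prop where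
  | put {S : RState Lab} {n rd} :
      instrAt S = some (.Put n rd) →
      RStep S { S with pc := ⟨S.pc.addr + 1, S.pc.lab⟩,
                       rf := S.rf.set rd ⟨.int n, ⊥⟩ }
  | putLabel {S : RState Lab} {ℓ rd} :
      instrAt S = some (.PutLabel ℓ rd) →
      RStep S { S with pc := ⟨S.pc.addr + 1, S.pc.lab⟩,
                       rf := S.rf.set rd ⟨.lab ℓ, ⊥⟩ }
  | mov {S : RState Lab} {rs rd a} :
      instrAt S = some (.Mov rs rd) →
      S.rf[rs]? = some a →
      RStep S { S with pc := ⟨S.pc.addr + 1, S.pc.lab⟩, rf := S.rf.set rd a }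
  | load {S : RState Lab} {rp rd b o ℓp vs ℓb v ℓv} :
      instrAt S = some (.Load rp rd) →
      S.rf[rp]? = some ⟨.ptr b o, ℓp⟩ →
      mget S.mem b = some (vs, ℓb) →
      getI vs o = some ⟨v, ℓv⟩ →
      RStep S { S with pc := ⟨S.pc.addr + 1, S.pc.lab ⊔ ℓp ⊔ ℓb⟩,
                       rf := S.rf.set rd ⟨v, ℓv⟩ }
  | store {S : RState Lab} {rp rs b o ℓp v ℓv vs ℓb} :
      instrAt S = some (.Store rp rs) →
      S.rf[rp]? = some ⟨.ptr b o, ℓp⟩ →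
      S.rf[rs]? = some ⟨v, ℓv⟩ →
      mget S.mem b = some (vs, ℓb) →
      S.pc.lab ⊔ ℓp ≤ ℓb →
      RStep S { S with pc := ⟨S.pc.addr + 1, S.pc.lab⟩,
                       mem := mset S.mem b (setI vs o ⟨v, ℓv⟩, ℓb) }
  | write {S : RState Lab} {rp rs b o ℓp v ℓv vs ℓb v' ℓv'} :
      instrAt S = some (.Write rp rs) →
      S.rf[rp]? = some ⟨.ptr b o, ℓp⟩ →
      S.rf[rs]? = some ⟨v, ℓv⟩ →
      mget S.mem b = some (vs, ℓb) →
      getI vs o = some ⟨v', ℓv'⟩ →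
      S.pc.lab ⊔ ℓp ⊔ ℓv ≤ ℓb ⊔ ℓv' →
      RStep S { S with pc := ⟨S.pc.addr + 1, S.pc.lab⟩,
                       mem := mset S.mem b (setI vs o ⟨v, ℓv'⟩, ℓb) }
  | upgrade {S : RState Lab} {rp rl b o ℓp ℓ ℓ' vs ℓb v' ℓv'} :
      instrAt S = some (.Upgrade rp rl) →
      S.rf[rp]? = some ⟨.ptr b o, ℓp⟩ →
      S.rf[rl]? = some ⟨.lab ℓ, ℓ'⟩ →
      mget S.mem b = some (vs, ℓb) →
      getI vs o = some ⟨v', ℓv'⟩ →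
      ℓv' ≤ ℓ ⊔ ℓb →
      (S.pc.lab ⊔ ℓ') ⊔ ℓp ≤ ℓb →
      RStep S { S with pc := ⟨S.pc.addr + 1, S.pc.lab ⊔ ℓ'⟩,
                       mem := mset S.mem b (setI vs o ⟨v', ℓ⟩, ℓb) }
  | alloc {S : RState Lab} {rn rl rd n ℓn ℓ ℓ'} :
      instrAt S = some (.Alloc rn rl rd) →
      S.rf[rn]? = some ⟨.int n, ℓn⟩ →
      0 < n →
      S.rf[rl]? = some ⟨.lab ℓ, ℓ'⟩ →
      RStep S { S with pc := ⟨S.pc.addr + 1, S.pc.lab⟩,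
                       rf := S.rf.set rd
                         ⟨.ptr (fresh S.mem (S.pc.lab ⊔ ℓn ⊔ ℓ')) 0, ℓn ⊔ ℓ'⟩,
                       mem := allocMem S.mem (S.pc.lab ⊔ ℓn ⊔ ℓ')
                         (List.replicate n.toNat ⟨.int 0, ⊥⟩, ℓ) }
  | add {S : RState Lab} {r1 r2 rd n1 ℓ1 n2 ℓ2} :
      instrAt S = some (.Add r1 r2 rd) →
      S.rf[r1]? = some ⟨.int n1, ℓ1⟩ →
      S.rf[r2]? = some ⟨.int n2, ℓ2⟩ →
      RStep S { S with pc := ⟨S.pc.addr + 1, S.pc.lab⟩,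
                       rf := S.rf.set rd ⟨.int (n1 + n2), ℓ1 ⊔ ℓ2⟩ }
  | mult {S : RState Lab} {r1 r2 rd n1 ℓ1 n2 ℓ2} :
      instrAt S = some (.Mult r1 r2 rd) →
      S.rf[r1]? = some ⟨.int n1, ℓ1⟩ →
      S.rf[r2]? = some ⟨.int n2, ℓ2⟩ →
      RStep S { S with pc := ⟨S.pc.addr + 1, S.pc.lab⟩,
                       rf := S.rf.set rd ⟨.int (n1 * n2), ℓ1 ⊔ ℓ2⟩ }
  | eq {S : RState Lab} {r1 r2 rd v1 ℓ1 v2 ℓ2} :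
      instrAt S = some (.Eq r1 r2 rd) →
      S.rf[r1]? = some ⟨v1, ℓ1⟩ →
      S.rf[r2]? = some ⟨v2, ℓ2⟩ →
      RStep S { S with pc := ⟨S.pc.addr + 1, S.pc.lab⟩,
                       rf := S.rf.set rd ⟨.int (if v1 = v2 then 1 else 0), ℓ1 ⊔ ℓ2⟩ }
  | noop {S : RState Lab} :
      instrAt S = some .Noop →
      RStep S { S with pc := ⟨S.pc.addr + 1, S.pc.lab⟩ }
  | jump {S : RState Lab} {r n ℓn} :
      instrAt S = some (.Jump r) →
      S.rf[r]? = some ⟨.int n, ℓn⟩ →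
      RStep S { S with pc := ⟨n, ℓn ⊔ S.pc.lab⟩ }
  | branchNZ {S : RState Lab} {n r k ℓ} :
      instrAt S = some (.BranchNZ n r) →
      S.rf[r]? = some ⟨.int k, ℓ⟩ →
      RStep S { S with pc := ⟨if k = 0 then S.pc.addr + 1 else S.pc.addr + n,
                              S.pc.lab ⊔ ℓ⟩ }
  | call {S : RState Lab} {r1 r2 r3 n ℓn ℓ ℓ'} :
      instrAt S = some (.Call r1 r2 r3) →
      S.rf[r1]? = some ⟨.int n, ℓn⟩ →
      S.rf[r3]? = some ⟨.lab ℓ, ℓ'⟩ →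
      RStep S { S with pc := ⟨n, S.pc.lab ⊔ ℓn⟩,
                       cs := ⟨⟨S.pc.addr + 1, S.pc.lab ⊔ ℓ'⟩, S.rf, r2, ℓ⟩ :: S.cs }
  | ret {S : RState Lab} {f : Frame Lab} {cs' v ℓ} :
      instrAt S = some .Return →
      S.cs = f :: cs' →
      S.rf[f.retReg]? = some ⟨v, ℓ⟩ →
      ℓ ⊔ S.pc.lab ≤ f.retLab ⊔ f.retpc.lab →
      RStep S { S with pc := f.retpc,
                       rf := f.savedRegs.set f.retReg ⟨v, f.retLab⟩,
                       cs := cs' }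
  | labelOf {S : RState Lab} {rs rd v ℓ} :
      instrAt S = some (.LabelOf rs rd) →
      S.rf[rs]? = some ⟨v, ℓ⟩ →
      RStep S { S with pc := ⟨S.pc.addr + 1, S.pc.lab⟩,
                       rf := S.rf.set rd ⟨.lab ℓ, ⊥⟩ }
  | pcLabel {S : RState Lab} {rd} :
      instrAt S = some (.PcLabel rd) →
      RStep S { S with pc := ⟨S.pc.addr + 1, S.pc.lab⟩,
                       rf := S.rf.set rd ⟨.lab S.pc.lab, ⊥⟩ }
  | join {S : RState Lab} {r1 r2 rd ℓ1 ℓ1' ℓ2 ℓ2'} :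
      instrAt S = some (.Join r1 r2 rd) →
      S.rf[r1]? = some ⟨.lab ℓ1, ℓ1'⟩ →
      S.rf[r2]? = some ⟨.lab ℓ2, ℓ2'⟩ →
      RStep S { S with pc := ⟨S.pc.addr + 1, S.pc.lab⟩,
                       rf := S.rf.set rd ⟨.lab (ℓ1 ⊔ ℓ2), ℓ1' ⊔ ℓ2'⟩ }
  | flowsTo {S : RState Lab} {r1 r2 rd ℓ1 ℓ1' ℓ2 ℓ2'} :
      instrAt S = some (.FlowsTo r1 r2 rd) →
      S.rf[r1]? = some ⟨.lab ℓ1, ℓ1'⟩ →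
      S.rf[r2]? = some ⟨.lab ℓ2, ℓ2'⟩ →
      RStep S { S with pc := ⟨S.pc.addr + 1, S.pc.lab⟩,
                       rf := S.rf.set rd
                         ⟨.int (if ℓ1 ≤ ℓ2 then 1 else 0), ℓ1' ⊔ ℓ2'⟩ }
  | getOffset {S : RState Lab} {rp rd b o ℓp} :
      instrAt S = some (.GetOffset rp rd) →
      S.rf[rp]? = some ⟨.ptr b o, ℓp⟩ →
      RStep S { S with pc := ⟨S.pc.addr + 1, S.pc.lab⟩,
                       rf := S.rf.set rd ⟨.int o, ℓp⟩ }
  | setOffset {S : RState Lab} {rp ro rd b o' ℓp o ℓo} :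
      instrAt S = some (.SetOffset rp ro rd) →
      S.rf[rp]? = some ⟨.ptr b o', ℓp⟩ →
      S.rf[ro]? = some ⟨.int o, ℓo⟩ →
      RStep S { S with pc := ⟨S.pc.addr + 1, S.pc.lab⟩,
                       rf := S.rf.set rd ⟨.ptr b o, ℓp ⊔ ℓo⟩ }
  | getBlockSize {S : RState Lab} {rp rd b o ℓp vs ℓb} :
      instrAt S = some (.GetBlockSize rp rd) →
      S.rf[rp]? = some ⟨.ptr b o, ℓp⟩ →
      mget S.mem b = some (vs, ℓb) →
      RStep S { S with pc := ⟨S.pc.addr + 1, S.pc.lab ⊔ ℓp⟩,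
                       rf := S.rf.set rd ⟨.int vs.length, ℓb⟩ }
  | getBlockLabel {S : RState Lab} {rp rd b o ℓp vs ℓb} :
      instrAt S = some (.GetBlockLabel rp rd) →
      S.rf[rp]? = some ⟨.ptr b o, ℓp⟩ →
      mget S.mem b = some (vs, ℓb) →
      RStep S { S with pc := ⟨S.pc.addr + 1, S.pc.lab⟩,
                       rf := S.rf.set rd ⟨.lab ℓb, ℓp⟩ }

/-- The blocks directly accessible at level `ℓ` from a list of atoms. -/
def blocksIn (ℓ : Lab) (atoms : List (Atom Lab)) (b : Bid Lab) : Prop :=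
  ∃ o ℓv, (⟨.ptr b o, ℓv⟩ : Atom Lab) ∈ atoms ∧ ℓv ≤ ℓ

/-- The root set of a state at observation level `ℓ`. -/
def rootSet (ℓ : Lab) (S : RState Lab) (b : Bid Lab) : Prop :=
  (S.pc.lab ≤ ℓ ∧ blocksIn ℓ S.rf b) ∨
  ∃ f ∈ S.cs, f.retpc.lab ≤ ℓ ∧ blocksIn ℓ f.savedRegs b

/-- Direct links between blocks visible at level `ℓ`. -/
def link (ℓ : Lab) (m : Mem Lab) (b b' : Bid Lab) : Prop :=
  ∃ vs ℓb, mget m b = some (vs, ℓb) ∧ ℓb ≤ ℓ ∧ blocksIn ℓ vs b'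

/-- A state is well-stamped if every block reachable at level `ℓ` from the
root set at `ℓ` has a stamp flowing to `ℓ`. -/
def WellStamped (S : RState Lab) : Prop :=
  ∀ ℓ b b', rootSet ℓ S b → Relation.ReflTransGen (link ℓ S.mem) b b' →
    b'.1 ≤ ℓ

end Machine

section Indist

variable {Lab : Type} [Lattice Lab] [OrderBot Lab] [DecidableEq Lab]
variable [DecidableRel ((· ≤ ·) : Lab → Lab → Prop)]

/-- Indistinguishability of labeled values at level `ℓ`: the labels are equal
and, if the label is observable, the values are (syntactically) equal. -/
def atomIndist (ℓ : Lab) (a1 a2 : Atom Lab) : Prop :=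
  a1.lab = a2.lab ∧ (a1.lab ≤ ℓ → a1.val = a2.val)

/-- Indistinguishability of register files: pointwise. -/
def rfIndist (ℓ : Lab) : List (Atom Lab) → List (Atom Lab) → Prop :=
  List.Forall₂ (atomIndist ℓ)

/-- Indistinguishability of labeled blocks: equal block labels and, if the
block label is observable, pointwise indistinguishable contents. -/
def blockIndist (ℓ : Lab) (b1 b2 : Block Lab) : Prop :=
  b1.2 = b2.2 ∧ (b1.2 ≤ ℓ → List.Forall₂ (atomIndist ℓ) b1.1 b2.1)

/-- Indistinguishability of memories at level `ℓ`: every block identifier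
whose stamp flows to `ℓ` is either unallocated in both memories or points to
indistinguishable labeled blocks. -/
def memIndist (ℓ : Lab) (m1 m2 : Mem Lab) : Prop :=
  ∀ (σ : Lab) (i : ℕ), σ ≤ ℓ →
    ((m1 σ)[i]? = none ∧ (m2 σ)[i]? = none) ∨
    (∃ blk1 blk2, (m1 σ)[i]? = some blk1 ∧ (m2 σ)[i]? = some blk2 ∧
      blockIndist ℓ blk1 blk2)

/-- Indistinguishability of stack frames: whenever either saved pc label is
observable, the saved pcs, register files, result registers, and result
labels agree. -/
def frameIndist (ℓ : Lab) (f1 f2 : Frame Lab) : Prop :=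
  (f1.retpc.lab ≤ ℓ ∨ f2.retpc.lab ≤ ℓ) →
    (f1.retpc = f2.retpc ∧ rfIndist ℓ f1.savedRegs f2.savedRegs ∧
     f1.retReg = f2.retReg ∧ f1.retLab = f2.retLab)

/-- Drop the maximal prefix of call-stack frames whose saved pc labels do not
flow to the observer. -/
def csDropHigh (ℓ : Lab) (cs : List (Frame Lab)) : List (Frame Lab) :=
  cs.dropWhile (fun f => decide (¬ f.retpc.lab ≤ ℓ))

/-- Whole-state indistinguishability `≈full` at level `ℓ`. -/
def stateIndist (ℓ : Lab) (S1 S2 : RState Lab) : Prop :=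
  memIndist ℓ S1.mem S2.mem ∧
  S1.imem = S2.imem ∧
  ((S1.pc.lab ≤ ℓ ∨ S2.pc.lab ≤ ℓ) →
    (S1.pc = S2.pc ∧ rfIndist ℓ S1.rf S2.rf ∧
     List.Forall₂ (frameIndist ℓ) S1.cs S2.cs)) ∧
  (¬ (S1.pc.lab ≤ ℓ ∨ S2.pc.lab ≤ ℓ) →
    List.Forall₂ (frameIndist ℓ) (csDropHigh ℓ S1.cs) (csDropHigh ℓ S2.cs))

/-- The well-stamped full-state indistinguishability relation `≈fullws`. -/
def fullIndist (ℓ : Lab) (S1 S2 : RState Lab) : Prop :=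
  WellStamped S1 ∧ WellStamped S2 ∧ stateIndist ℓ S1 S2

/-- A state is low at observation level `ℓ` iff its pc label flows to `ℓ`. -/
def LowSt (ℓ : Lab) (S : RState Lab) : Prop := S.pc.lab ≤ ℓ

end Indist

section Filtering

variable {Lab : Type} [Lattice Lab] [OrderBot Lab] [DecidableEq Lab]
variable [DecidableRel ((· ≤ ·) : Lab → Lab → Prop)]

/-- Keep only the call-stack frames whose saved pc label flows to the
observer. -/
def csFilterLow (ℓ : Lab) (cs : List (Frame Lab)) : List (Frame Lab) :=
  cs.filter (fun f => decide (f.retpc.lab ≤ ℓ))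

/-- The (wrong) filtering-based whole-state indistinguishability: the call
stacks are always compared after filtering out all high frames. -/
def filterStateIndist (ℓ : Lab) (S1 S2 : RState Lab) : Prop :=
  memIndist ℓ S1.mem S2.mem ∧
  S1.imem = S2.imem ∧
  List.Forall₂ (frameIndist ℓ) (csFilterLow ℓ S1.cs) (csFilterLow ℓ S2.cs) ∧
  ((S1.pc.lab ≤ ℓ ∨ S2.pc.lab ≤ ℓ) →
    (S1.pc = S2.pc ∧ rfIndist ℓ S1.rf S2.rf))

end Filtering

theorem List.filter_dropWhile_not {α : Type*} (p : α → Bool) (l : List α) :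
    (l.dropWhile fun a => !p a).filter p = l.filter p := by
  induction l with
  | nil => rfl
  | cons a l ih => cases h : p a <;> simp [h, ih]

section Indist

variable {Lab : Type} [Lattice Lab]

theorem atomIndist_refl (ℓ : Lab) (a : Atom Lab) : atomIndist ℓ a a :=
  ⟨rfl, fun _ => rfl⟩

theorem rfIndist_refl (ℓ : Lab) (rf : List (Atom Lab)) : rfIndist ℓ rf rf :=
  List.forall₂_same.mpr fun a _ => atomIndist_refl ℓ a

theorem memIndist_refl (ℓ : Lab) (m : Mem Lab) : memIndist ℓ m m := by
  intro σ i _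
  cases h : (m σ)[i]? with
  | none => exact Or.inl ⟨rfl, rfl⟩
  | some blk => exact Or.inr ⟨blk, blk, rfl, rfl, rfl, fun _ => rfIndist_refl ℓ blk.1⟩

theorem frameIndist_refl (ℓ : Lab) (f : Frame Lab) : frameIndist ℓ f f :=
  fun _ => ⟨rfl, rfIndist_refl ℓ f.savedRegs, rfl, rfl⟩

theorem frameIndist.retpc_lab_le_iff {ℓ : Lab} {f1 f2 : Frame Lab}
    (h : frameIndist ℓ f1 f2) : f1.retpc.lab ≤ ℓ ↔ f2.retpc.lab ≤ ℓ :=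
  ⟨fun h1 => (h (.inl h1)).1 ▸ h1, fun h2 => (h (.inr h2)).1 ▸ h2⟩

theorem wellStamped_of_not_blocksIn {S : RState Lab} (hrf : ∀ ℓ b, ¬ blocksIn ℓ S.rf b)
    (hcs : ∀ f ∈ S.cs, ∀ ℓ b, ¬ blocksIn ℓ f.savedRegs b) : WellStamped S := by
  rintro ℓ b b' (⟨-, hb⟩ | ⟨f, hf, -, hb⟩)
  · exact absurd hb (hrf ℓ b)
  · exact absurd hb (hcs f hf ℓ b)

variable [DecidableRel ((· ≤ ·) : Lab → Lab → Prop)]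

theorem List.Forall₂.csFilterLow {ℓ : Lab} {cs1 cs2 : List (Frame Lab)}
    (h : List.Forall₂ (frameIndist ℓ) cs1 cs2) :
    List.Forall₂ (frameIndist ℓ) (csFilterLow ℓ cs1) (csFilterLow ℓ cs2) :=
  List.rel_filter (fun _ _ hf => by simpa using hf.retpc_lab_le_iff) h

theorem csFilterLow_csDropHigh (ℓ : Lab) (cs : List (Frame Lab)) :
    csFilterLow ℓ (csDropHigh ℓ cs) = csFilterLow ℓ cs := by
  simpa only [csFilterLow, csDropHigh, decide_not] using
    List.filter_dropWhile_not (fun f : Frame Lab => decide (f.retpc.lab ≤ ℓ)) cs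

theorem filterStateIndist_of_stateIndist {ℓ : Lab} {S1 S2 : RState Lab}
    (h : stateIndist ℓ S1 S2) : filterStateIndist ℓ S1 S2 := by
  obtain ⟨hmem, himem, hlow, hhigh⟩ := h
  refine ⟨hmem, himem, ?_, fun hpc => ⟨(hlow hpc).1, (hlow hpc).2.1⟩⟩
  by_cases hpc : S1.pc.lab ≤ ℓ ∨ S2.pc.lab ≤ ℓ
  · exact (hlow hpc).2.2.csFilterLow
  · simpa only [csFilterLow_csDropHigh] using (hhigh hpc).csFilterLow

theorem stateIndist.length_cs_eq {ℓ : Lab} {S1 S2 : RState Lab} (h : stateIndist ℓ S1 S2)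
    (hpc : S1.pc.lab ≤ ℓ) : S1.cs.length = S2.cs.length :=
  (h.2.2.1 (Or.inl hpc)).2.2.length_eq

end Indist

namespace Diamond

theorem not_H_le_L : ¬ H ≤ L := by decide

def lowFrame : Frame Diamond := ⟨⟨0, L⟩, [], 0, L⟩

def highFrame : Frame Diamond := ⟨⟨5, H⟩, [], 0, H⟩

def returnState (cs : List (Frame Diamond)) : RState Diamond :=
  ⟨⟨0, L⟩, [⟨.int 0, L⟩], cs, fun _ => [], [.Return]⟩

theorem wellStamped_returnState {cs : List (Frame Diamond)}
    (hcs : ∀ f ∈ cs, f.savedRegs = []) : WellStamped (returnState cs) := by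
  refine wellStamped_of_not_blocksIn ?_ fun f hf ℓ b => ?_
  · simp [returnState, blocksIn]
  · simp [hcs f hf, blocksIn]

theorem exists_rStep_returnState (f : Frame Diamond) (cs : List (Frame Diamond))
    (hf : f.retReg = 0) : ∃ S', RStep (returnState (f :: cs)) S' ∧ S'.pc = f.retpc :=
  ⟨_, RStep.ret (v := .int 0) (ℓ := L) rfl rfl (by simp [returnState, hf])
    (sup_le bot_le bot_le), rfl⟩

theorem filterStateIndist_returnState :
    filterStateIndist L (returnState [lowFrame]) (returnState [highFrame, lowFrame]) := by
  refine ⟨memIndist_refl L _, rfl, ?_, fun _ => ⟨rfl, rfIndist_refl L _⟩⟩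
  have hfilter : csFilterLow L [highFrame, lowFrame] = csFilterLow L [lowFrame] := by
    simp [csFilterLow, lowFrame, highFrame, not_H_le_L]
  change List.Forall₂ _ _ (csFilterLow L [highFrame, lowFrame])
  rw [hfilter]
  exact (List.forall₂_same.mpr fun f _ => frameIndist_refl L f).csFilterLow

end Diamond

open Diamond in
/-- For the register machine over the diamond lattice, the filtering-based
stack indistinguishability is strictly weaker than the `dropWhile`-based one,
and it is unsound: there exist two well-stamped low states that are
indistinguishable under the filtering relation such that one steps to a state
with an observable pc while the other steps to a state with an unobservable
pc, violating SSNI condition (1). -/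
theorem filtering_indist_weaker_and_unsound :
    (∀ (ℓ : Diamond) (S1 S2 : RState Diamond),
      stateIndist ℓ S1 S2 → filterStateIndist ℓ S1 S2) ∧
    (∃ (ℓ : Diamond) (S1 S2 : RState Diamond),
      filterStateIndist ℓ S1 S2 ∧ ¬ stateIndist ℓ S1 S2) ∧
    (∃ (ℓ : Diamond) (S1 S2 S1' S2' : RState Diamond),
      WellStamped S1 ∧ WellStamped S2 ∧
      S1.pc.lab ≤ ℓ ∧ S2.pc.lab ≤ ℓ ∧
      filterStateIndist ℓ S1 S2 ∧
      RStep S1 S1' ∧ RStep S2 S2' ∧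
      S1'.pc.lab ≤ ℓ ∧ ¬ S2'.pc.lab ≤ ℓ) := by
  have hS := filterStateIndist_returnState
  have hnot : ¬ stateIndist L (returnState [lowFrame]) (returnState [highFrame, lowFrame]) :=
    fun h => by simpa [returnState] using h.length_cs_eq le_rfl
  obtain ⟨S1', hstep1, hpc1⟩ := exists_rStep_returnState lowFrame [] rfl
  obtain ⟨S2', hstep2, hpc2⟩ := exists_rStep_returnState highFrame [lowFrame] rfl
  refine ⟨fun _ _ _ => filterStateIndist_of_stateIndist, ⟨L, _, _, hS, hnot⟩,
    ⟨L, _, _, S1', S2', wellStamped_returnState ?_, wellStamped_returnState ?_, le_rfl, le_rfl,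
      hS, hstep1, hstep2, by simp [hpc1, lowFrame], by simpa [hpc2, highFrame] using not_H_le_L⟩⟩
  · simp [lowFrame]
  · simp [lowFrame, highFrame]
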